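/- arXiv:2303.14244 — 2 statements merged into one kernel-verified Lean document; each statement's English description precedes it below -/
import Mathlib

section
/- There exists a sufficiently small absolute constant c̃ > 0 with the following property. Assume σ_min(L_{F₁}ᵀZ₀) > 0, ‖Z₀‖ ≤ √(‖X‖/(24 min{n₁+n₂, k})) · (cσ_min(L_{F₁}ᵀZ₀)/(2κ²‖Z₀‖))^{18κ}, (2/3)‖X‖ ≤ ‖F‖ ≤ (4/3)‖X‖, and μ ≤ c̃/σ_min(X). Then for any constant 0 < c ≤ 1 it holds that t⋆ := ⌈ln(cσ_min(L_{F₁}ᵀZ₀)/(2κ²‖Z₀‖))/ln(1 − μσ_min(X)/8)⌉ ≤ ln(‖F‖/(16 min{k, n₁+n₂}‖Z₀‖²))/(3 ln(1 + μ‖F‖)). -/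
open Matrix MeasureTheory ProbabilityTheory

noncomputable section

namespace AsymMatrixSensing

/-- Euclidean norm of a real vector. -/
def euclNorm {ι : Type*} [Fintype ι] (v : ι → ℝ) : ℝ :=
  Real.sqrt (∑ i, v i ^ 2)

/-- Spectral norm of a real matrix. -/
def specNorm {ι₁ ι₂ : Type*} [Fintype ι₁] [Fintype ι₂] (M : Matrix ι₁ ι₂ ℝ) : ℝ :=
  sSup {c : ℝ | ∃ x : ι₂ → ℝ, euclNorm x ≤ 1 ∧ c = euclNorm (M.mulVec x)}

/-- Frobenius norm of a real matrix. -/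
def frobNorm {ι₁ ι₂ : Type*} [Fintype ι₁] [Fintype ι₂] (M : Matrix ι₁ ι₂ ℝ) : ℝ :=
  Real.sqrt (∑ i, ∑ j, M i j ^ 2)

/-- Nuclear norm of a real matrix (characterized by duality with the spectral norm). -/
def nucNorm {ι₁ ι₂ : Type*} [Fintype ι₁] [Fintype ι₂] (M : Matrix ι₁ ι₂ ℝ) : ℝ :=
  sSup {c : ℝ | ∃ B : Matrix ι₁ ι₂ ℝ, specNorm B ≤ 1 ∧ c = ∑ i, ∑ j, M i j * B i j}

/-- Smallest singular value `σ_{min(a,b)}(M)` of a matrix. -/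
def sigmaMin {ι₁ ι₂ : Type*} [Fintype ι₁] [Fintype ι₂] (M : Matrix ι₁ ι₂ ℝ) : ℝ :=
  max (sInf {c : ℝ | ∃ x : ι₂ → ℝ, euclNorm x = 1 ∧ c = euclNorm (M.mulVec x)})
      (sInf {c : ℝ | ∃ y : ι₁ → ℝ, euclNorm y = 1 ∧ c = euclNorm (Mᵀ.mulVec y)})

/-- Smallest nonzero singular value `σ_rank(M)`: the minimum of `‖Mx‖` over unit
vectors `x` orthogonal to the kernel of `M`. -/
def sigmaPos {ι₁ ι₂ : Type*} [Fintype ι₁] [Fintype ι₂] (M : Matrix ι₁ ι₂ ℝ) : ℝ :=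
  sInf {c : ℝ | ∃ x : ι₂ → ℝ, euclNorm x = 1 ∧
    (∀ y : ι₂ → ℝ, M.mulVec y = 0 → x ⬝ᵥ y = 0) ∧ c = euclNorm (M.mulVec x)}

/-- Condition number `κ = ‖M‖ / σ_min(M)`. -/
def condNum {ι₁ ι₂ : Type*} [Fintype ι₁] [Fintype ι₂] (M : Matrix ι₁ ι₂ ℝ) : ℝ :=
  specNorm M / sigmaPos M

/-- Trace inner product `⟨M, N⟩ = trace(Mᵀ N)`. -/
def minner {ι₁ ι₂ : Type*} [Fintype ι₁] [Fintype ι₂] (M N : Matrix ι₁ ι₂ ℝ) : ℝ :=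
  ∑ i, ∑ j, M i j * N i j

/-- `P` is a matrix with orthonormal columns spanning the column space of `M`. -/
def IsOrthCol {ι κ₁ κ₂ : Type*} [Fintype ι] [Fintype κ₁] [Fintype κ₂] [DecidableEq κ₂]
    (P : Matrix ι κ₂ ℝ) (M : Matrix ι κ₁ ℝ) : Prop :=
  Pᵀ * P = 1 ∧ (∃ C : Matrix κ₁ κ₂ ℝ, P = M * C) ∧ P * Pᵀ * M = M

/-- `L` has orthonormal columns spanning the subspace spanned by eigenvectors of the
symmetric matrix `F` corresponding to its `r` largest eigenvalues. -/
def IsTopEigenspace {ι : Type*} [Fintype ι] [DecidableEq ι] {r : ℕ} (F : Matrix ι ι ℝ)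
    (L : Matrix ι (Fin r) ℝ) : Prop :=
  Lᵀ * L = 1 ∧ ∃ d : Fin r → ℝ, F * L = L * Matrix.diagonal d ∧
    ∀ (v : ι → ℝ) (lam : ℝ), v ≠ 0 → F.mulVec v = lam • v →
      Lᵀ.mulVec v = 0 → ∀ i, lam ≤ d i

variable {n₁ n₂ m k r : ℕ}

/-- The measurement operator `𝒜`, given by `[𝒜(Z)]ᵢ = ⟨Aᵢ, Z⟩`. -/
def calA (A : Fin m → Matrix (Fin n₁) (Fin n₂) ℝ) (Z : Matrix (Fin n₁) (Fin n₂) ℝ) :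
    Fin m → ℝ := fun i => minner (A i) Z

/-- The restricted isometry property of order `s` with constant `δ`. -/
def HasRIP (A : Fin m → Matrix (Fin n₁) (Fin n₂) ℝ) (s : ℕ) (δ : ℝ) : Prop :=
  ∀ M : Matrix (Fin n₁) (Fin n₂) ℝ, M.rank ≤ s →
    (1 - δ) * frobNorm M ^ 2 ≤ ∑ i, calA A M i ^ 2 ∧
      ∑ i, calA A M i ^ 2 ≤ (1 + δ) * frobNorm M ^ 2

/-- `𝒜*𝒜`. -/
def AstarA (A : Fin m → Matrix (Fin n₁) (Fin n₂) ℝ) (Z : Matrix (Fin n₁) (Fin n₂) ℝ) :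
    Matrix (Fin n₁) (Fin n₂) ℝ := ∑ i, minner (A i) Z • A i

/-- The symmetrization `sym(X) = [[0, X], [Xᵀ, 0]]`. -/
def symMat (X : Matrix (Fin n₁) (Fin n₂) ℝ) :
    Matrix (Fin n₁ ⊕ Fin n₂) (Fin n₁ ⊕ Fin n₂) ℝ := Matrix.fromBlocks 0 X Xᵀ 0

/-- The symmetrized measurement matrices `Bᵢ = (1/√2)[[0, Aᵢ], [Aᵢᵀ, 0]]`. -/
def Bmat (A : Fin m → Matrix (Fin n₁) (Fin n₂) ℝ) (i : Fin m) :
    Matrix (Fin n₁ ⊕ Fin n₂) (Fin n₁ ⊕ Fin n₂) ℝ :=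
  (Real.sqrt 2)⁻¹ • Matrix.fromBlocks 0 (A i) (A i)ᵀ 0

/-- `ℬ*ℬ`. -/
def BstarB (A : Fin m → Matrix (Fin n₁) (Fin n₂) ℝ)
    (S : Matrix (Fin n₁ ⊕ Fin n₂) (Fin n₁ ⊕ Fin n₂) ℝ) :
    Matrix (Fin n₁ ⊕ Fin n₂) (Fin n₁ ⊕ Fin n₂) ℝ :=
  ∑ i, minner (Bmat A i) S • Bmat A i

/-- The factorized gradient descent iterates `(V_t, W_t)`. -/
def iter (A : Fin m → Matrix (Fin n₁) (Fin n₂) ℝ) (X : Matrix (Fin n₁) (Fin n₂) ℝ)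
    (μ : ℝ) (V₀ : Matrix (Fin n₁) (Fin k) ℝ) (W₀ : Matrix (Fin n₂) (Fin k) ℝ) :
    ℕ → Matrix (Fin n₁) (Fin k) ℝ × Matrix (Fin n₂) (Fin k) ℝ
  | 0 => (V₀, W₀)
  | t + 1 =>
    let p := iter A X μ V₀ W₀ t
    let G := AstarA A (p.1 * p.2ᵀ - X)
    (p.1 - μ • (G * p.2), p.2 - μ • (Gᵀ * p.1))

/-- The vertical stacking `(1/√2)[V; W]`. -/
def Zstack {κ : ℕ} (V : Matrix (Fin n₁) (Fin κ) ℝ) (W : Matrix (Fin n₂) (Fin κ) ℝ) :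
    Matrix (Fin n₁ ⊕ Fin n₂) (Fin κ) ℝ :=
  (Real.sqrt 2)⁻¹ • Matrix.fromRows V W

/-- `Z_t = (1/√2)[V_t; W_t]`. -/
def Zit (A : Fin m → Matrix (Fin n₁) (Fin n₂) ℝ) (X : Matrix (Fin n₁) (Fin n₂) ℝ)
    (μ : ℝ) (V₀ : Matrix (Fin n₁) (Fin k) ℝ) (W₀ : Matrix (Fin n₂) (Fin k) ℝ) (t : ℕ) :
    Matrix (Fin n₁ ⊕ Fin n₂) (Fin k) ℝ :=
  Zstack (iter A X μ V₀ W₀ t).1 (iter A X μ V₀ W₀ t).2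

/-- `Z̃_t = (1/√2)[V_t; −W_t]`. -/
def Ztil (A : Fin m → Matrix (Fin n₁) (Fin n₂) ℝ) (X : Matrix (Fin n₁) (Fin n₂) ℝ)
    (μ : ℝ) (V₀ : Matrix (Fin n₁) (Fin k) ℝ) (W₀ : Matrix (Fin n₂) (Fin k) ℝ) (t : ℕ) :
    Matrix (Fin n₁ ⊕ Fin n₂) (Fin k) ℝ :=
  Zstack (iter A X μ V₀ W₀ t).1 (-(iter A X μ V₀ W₀ t).2)

/-- `Δ_t = (Id − ℬ*ℬ)(Z_tZ_tᵀ − Z̃_tZ̃_tᵀ − sym(X))`. -/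
def Δit (A : Fin m → Matrix (Fin n₁) (Fin n₂) ℝ) (X : Matrix (Fin n₁) (Fin n₂) ℝ)
    (μ : ℝ) (V₀ : Matrix (Fin n₁) (Fin k) ℝ) (W₀ : Matrix (Fin n₂) (Fin k) ℝ) (t : ℕ) :
    Matrix (Fin n₁ ⊕ Fin n₂) (Fin n₁ ⊕ Fin n₂) ℝ :=
  let D := Zit A X μ V₀ W₀ t * (Zit A X μ V₀ W₀ t)ᵀ
    - Ztil A X μ V₀ W₀ t * (Ztil A X μ V₀ W₀ t)ᵀ - symMat X
  D - BstarB A D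

/-- The block diagonal matrix `diag(Id_{n₁}, −Id_{n₂})`. -/
def flipSign (n₁ n₂ : ℕ) : Matrix (Fin n₁ ⊕ Fin n₂) (Fin n₁ ⊕ Fin n₂) ℝ :=
  Matrix.fromBlocks 1 0 0 (-1)

/-- Product Gaussian measure modelling the random initialization pair `(V, W)`
with i.i.d. standard Gaussian entries. -/
def gaussPair (n₁ n₂ k : ℕ) :
    Measure ((Fin n₁ → Fin k → ℝ) × (Fin n₂ → Fin k → ℝ)) :=
  (Measure.pi fun _ : Fin n₁ => Measure.pi fun _ : Fin k => gaussianReal 0 1).prod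
    (Measure.pi fun _ : Fin n₂ => Measure.pi fun _ : Fin k => gaussianReal 0 1)

section AuxLemmas

variable {ι ι₁ ι₂ : Type*} [Fintype ι] [Fintype ι₁] [Fintype ι₂]

lemma euclNorm_nonneg (v : ι → ℝ) : 0 ≤ euclNorm v := Real.sqrt_nonneg _

lemma euclNorm_sq (v : ι → ℝ) : euclNorm v ^ 2 = ∑ i, v i ^ 2 :=
  Real.sq_sqrt (Finset.sum_nonneg fun _ _ => sq_nonneg _)

lemma dotProduct_self_eq_sq (v : ι → ℝ) : v ⬝ᵥ v = euclNorm v ^ 2 := by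
  rw [euclNorm_sq]
  simp [dotProduct, sq]

lemma dotProduct_le_euclNorm (u v : ι → ℝ) : u ⬝ᵥ v ≤ euclNorm u * euclNorm v := by
  have h : (u ⬝ᵥ v) ^ 2 ≤ (∑ i, u i ^ 2) * ∑ i, v i ^ 2 :=
    Finset.sum_mul_sq_le_sq_mul_sq _ u v
  have h2 : u ⬝ᵥ v ≤ Real.sqrt ((∑ i, u i ^ 2) * ∑ i, v i ^ 2) := by
    calc u ⬝ᵥ v ≤ |u ⬝ᵥ v| := le_abs_self _
      _ = Real.sqrt ((u ⬝ᵥ v) ^ 2) := (Real.sqrt_sq_eq_abs _).symm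
      _ ≤ _ := Real.sqrt_le_sqrt h
  rwa [Real.sqrt_mul (by positivity)] at h2

lemma euclNorm_smul (c : ℝ) (v : ι → ℝ) : euclNorm (c • v) = |c| * euclNorm v := by
  simp only [euclNorm, Pi.smul_apply, smul_eq_mul, mul_pow]
  rw [← Finset.mul_sum, Real.sqrt_mul (sq_nonneg c), Real.sqrt_sq_eq_abs]

lemma euclNorm_mulVec_le_frob (M : Matrix ι₁ ι₂ ℝ) {x : ι₂ → ℝ} (hx : euclNorm x ≤ 1) :
    euclNorm (M.mulVec x) ≤ frobNorm M := by
  have hx2 : ∑ j, x j ^ 2 ≤ 1 := by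
    have h := euclNorm_sq x
    nlinarith [euclNorm_nonneg x]
  show Real.sqrt (∑ i, M.mulVec x i ^ 2) ≤ Real.sqrt (∑ i, ∑ j, M i j ^ 2)
  apply Real.sqrt_le_sqrt
  calc ∑ i, M.mulVec x i ^ 2 ≤ ∑ i, (∑ j, M i j ^ 2) * ∑ j, x j ^ 2 := by
        apply Finset.sum_le_sum
        intro i _
        show (∑ j, M i j * x j) ^ 2 ≤ _
        exact Finset.sum_mul_sq_le_sq_mul_sq _ _ _
    _ ≤ ∑ i, ∑ j, M i j ^ 2 := by
        apply Finset.sum_le_sum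
        intro i _
        exact mul_le_of_le_one_right (by positivity) hx2

lemma specNorm_mem_le (M : Matrix ι₁ ι₂ ℝ) {c : ℝ}
    (hc : c ∈ {c : ℝ | ∃ x : ι₂ → ℝ, euclNorm x ≤ 1 ∧ c = euclNorm (M.mulVec x)}) :
    c ≤ specNorm M := by
  apply le_csSup
  · refine ⟨frobNorm M, ?_⟩
    rintro y ⟨x, hx, rfl⟩
    exact euclNorm_mulVec_le_frob M hx
  · exact hc

lemma specNorm_nonneg (M : Matrix ι₁ ι₂ ℝ) : 0 ≤ specNorm M := by
  apply specNorm_mem_le M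
  exact ⟨0, by simp [euclNorm], by simp [euclNorm]⟩

lemma euclNorm_eq_zero {v : ι → ℝ} (h : euclNorm v = 0) : v = 0 := by
  have h1 : ∑ i, v i ^ 2 ≤ 0 := Real.sqrt_eq_zero'.mp h
  have h2 : ∑ i, v i ^ 2 = 0 :=
    le_antisymm h1 (Finset.sum_nonneg fun _ _ => sq_nonneg _)
  funext i
  have := (Finset.sum_eq_zero_iff_of_nonneg (fun j _ => sq_nonneg (v j))).mp h2 i
    (Finset.mem_univ i)
  exact pow_eq_zero_iff (by norm_num) |>.mp this

lemma euclNorm_mulVec_le (M : Matrix ι₁ ι₂ ℝ) (v : ι₂ → ℝ) :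
    euclNorm (M.mulVec v) ≤ specNorm M * euclNorm v := by
  rcases eq_or_lt_of_le (euclNorm_nonneg v) with h | h
  · have hv : v = 0 := euclNorm_eq_zero h.symm
    subst hv
    simp only [Matrix.mulVec_zero]
    rw [← h, mul_zero]
    simp [euclNorm]
  · set t := euclNorm v with ht
    set x := t⁻¹ • v with hx
    have hxn : euclNorm x = 1 := by
      rw [hx, euclNorm_smul, abs_of_pos (inv_pos.mpr h), ← ht, inv_mul_cancel₀ h.ne']
    have hvx : v = t • x := by
      rw [hx, smul_inv_smul₀ h.ne']
    have hM : M.mulVec v = t • M.mulVec x := by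
      rw [hvx, Matrix.mulVec_smul]
    rw [hM, euclNorm_smul, abs_of_pos h]
    have hle : euclNorm (M.mulVec x) ≤ specNorm M :=
      specNorm_mem_le M ⟨x, hxn.le, rfl⟩
    calc t * euclNorm (M.mulVec x) ≤ t * specNorm M :=
          mul_le_mul_of_nonneg_left hle h.le
      _ = specNorm M * t := mul_comm _ _

lemma euclNorm_transpose_mulVec_le (M : Matrix ι₁ ι₂ ℝ) (u : ι₁ → ℝ) :
    euclNorm (Mᵀ.mulVec u) ≤ specNorm M * euclNorm u := by
  set w := Mᵀ.mulVec u with hw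
  have h1 : w ⬝ᵥ w = u ⬝ᵥ M.mulVec w := by
    rw [Matrix.dotProduct_mulVec u M w, ← Matrix.mulVec_transpose, ← hw]
  have key : euclNorm w ^ 2 ≤ euclNorm u * (specNorm M * euclNorm w) := by
    calc euclNorm w ^ 2 = w ⬝ᵥ w := (dotProduct_self_eq_sq w).symm
      _ = u ⬝ᵥ M.mulVec w := h1
      _ ≤ euclNorm u * euclNorm (M.mulVec w) := dotProduct_le_euclNorm _ _
      _ ≤ euclNorm u * (specNorm M * euclNorm w) :=
          mul_le_mul_of_nonneg_left (euclNorm_mulVec_le M w) (euclNorm_nonneg u)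
  rcases eq_or_lt_of_le (euclNorm_nonneg w) with h | h
  · rw [← h]
    exact mul_nonneg (specNorm_nonneg M) (euclNorm_nonneg u)
  · nlinarith [key, h]

lemma euclNorm_orth_mulVec {r : Type*} [Fintype r] [DecidableEq r] (L : Matrix ι r ℝ)
    (hL : Lᵀ * L = 1) (y : r → ℝ) : euclNorm (L.mulVec y) = euclNorm y := by
  have h : (L.mulVec y) ⬝ᵥ (L.mulVec y) = y ⬝ᵥ y := by
    rw [Matrix.dotProduct_mulVec, ← Matrix.mulVec_transpose, Matrix.mulVec_mulVec, hL,
      Matrix.one_mulVec]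
  have h2 : euclNorm (L.mulVec y) ^ 2 = euclNorm y ^ 2 := by
    rw [← dotProduct_self_eq_sq, ← dotProduct_self_eq_sq, h]
  calc euclNorm (L.mulVec y) = Real.sqrt (euclNorm (L.mulVec y) ^ 2) :=
        (Real.sqrt_sq (euclNorm_nonneg _)).symm
    _ = Real.sqrt (euclNorm y ^ 2) := by rw [h2]
    _ = euclNorm y := Real.sqrt_sq (euclNorm_nonneg _)

lemma euclNorm_orthT_mulVec {r : Type*} [Fintype r] [DecidableEq r] (L : Matrix ι r ℝ)
    (hL : Lᵀ * L = 1) (v : ι → ℝ) : euclNorm (Lᵀ.mulVec v) ≤ euclNorm v := by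
  set w := Lᵀ.mulVec v with hw
  have h1 : w ⬝ᵥ w = v ⬝ᵥ L.mulVec w := by
    rw [Matrix.dotProduct_mulVec v L w, ← Matrix.mulVec_transpose, ← hw]
  have key : euclNorm w ^ 2 ≤ euclNorm v * euclNorm w := by
    calc euclNorm w ^ 2 = w ⬝ᵥ w := (dotProduct_self_eq_sq w).symm
      _ = v ⬝ᵥ L.mulVec w := h1
      _ ≤ euclNorm v * euclNorm (L.mulVec w) := dotProduct_le_euclNorm _ _
      _ = euclNorm v * euclNorm w := by rw [euclNorm_orth_mulVec L hL]
  rcases eq_or_lt_of_le (euclNorm_nonneg w) with h | h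
  · rw [← h]; exact euclNorm_nonneg v
  · nlinarith [key, h]

lemma sInf_le_of_forall_le {S : Set ℝ} {B : ℝ} (hB : 0 ≤ B) (h0 : ∀ c ∈ S, 0 ≤ c)
    (h : ∀ c ∈ S, c ≤ B) : sInf S ≤ B := by
  rcases S.eq_empty_or_nonempty with rfl | ⟨c, hc⟩
  · simpa [Real.sInf_empty] using hB
  · exact (csInf_le ⟨0, h0⟩ hc).trans (h c hc)

lemma sigmaMin_mul_le {nn kk rr : Type*} [Fintype nn] [Fintype kk] [Fintype rr]
    [DecidableEq rr] (L : Matrix nn rr ℝ) (Zm : Matrix nn kk ℝ) (hL : Lᵀ * L = 1) :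
    sigmaMin (Lᵀ * Zm) ≤ specNorm Zm := by
  apply max_le
  · apply sInf_le_of_forall_le (specNorm_nonneg Zm)
    · rintro cc ⟨x, hx, rfl⟩; exact euclNorm_nonneg _
    · rintro cc ⟨x, hx, rfl⟩
      rw [← Matrix.mulVec_mulVec]
      calc euclNorm (Lᵀ.mulVec (Zm.mulVec x)) ≤ euclNorm (Zm.mulVec x) :=
            euclNorm_orthT_mulVec L hL _
        _ ≤ specNorm Zm * euclNorm x := euclNorm_mulVec_le Zm x
        _ = specNorm Zm := by rw [hx, mul_one]
  · apply sInf_le_of_forall_le (specNorm_nonneg Zm)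
    · rintro cc ⟨y, hy, rfl⟩; exact euclNorm_nonneg _
    · rintro cc ⟨y, hy, rfl⟩
      have ht : (Lᵀ * Zm)ᵀ = Zmᵀ * L := by
        rw [Matrix.transpose_mul, Matrix.transpose_transpose]
      rw [ht, ← Matrix.mulVec_mulVec]
      calc euclNorm (Zmᵀ.mulVec (L.mulVec y)) ≤ specNorm Zm * euclNorm (L.mulVec y) :=
            euclNorm_transpose_mulVec_le Zm _
        _ = specNorm Zm := by rw [euclNorm_orth_mulVec L hL, hy, mul_one]

lemma sigmaPos_nonneg (M : Matrix ι₁ ι₂ ℝ) : 0 ≤ sigmaPos M :=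
  Real.sInf_nonneg (by rintro cc ⟨x, _, _, rfl⟩; exact euclNorm_nonneg _)

lemma sigmaPos_le_specNorm (M : Matrix ι₁ ι₂ ℝ) : sigmaPos M ≤ specNorm M := by
  apply sInf_le_of_forall_le (specNorm_nonneg M)
  · rintro cc ⟨x, _, _, rfl⟩; exact euclNorm_nonneg _
  · rintro cc ⟨x, hx, _, rfl⟩
    calc euclNorm (M.mulVec x) ≤ specNorm M * euclNorm x := euclNorm_mulVec_le M x
      _ = specNorm M := by rw [hx, mul_one]

lemma specNorm_nonpos_left [IsEmpty ι₁] (M : Matrix ι₁ ι₂ ℝ) : specNorm M ≤ 0 := by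
  apply Real.sSup_le _ le_rfl
  rintro cc ⟨x, _, rfl⟩
  simp [euclNorm]

lemma specNorm_nonpos_right [IsEmpty ι₂] (M : Matrix ι₁ ι₂ ℝ) : specNorm M ≤ 0 := by
  apply Real.sSup_le _ le_rfl
  rintro cc ⟨x, _, rfl⟩
  have hx : M.mulVec x = 0 := by
    ext i
    simp [Matrix.mulVec, dotProduct]
  simp [hx, euclNorm]

end AuxLemmas

set_option maxHeartbeats 1000000 in
/-- the spectral alignment time fits within the power-method window. -/
theorem statement8_tstar_bound :
    ∃ ctil : ℝ, 0 < ctil ∧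
    ∀ (n₁ n₂ m k r : ℕ)
      (A : Fin m → Matrix (Fin n₁) (Fin n₂) ℝ) (X : Matrix (Fin n₁) (Fin n₂) ℝ)
      (hrankX : X.rank = r)
      (μ : ℝ) (hμ : 0 < μ)
      (V₀ : Matrix (Fin n₁) (Fin k) ℝ) (W₀ : Matrix (Fin n₂) (Fin k) ℝ)
      (Z : ℕ → Matrix (Fin n₁ ⊕ Fin n₂) (Fin k) ℝ) (hZ : Z = Zit A X μ V₀ W₀)
      (κ σm : ℝ) (hκ : κ = condNum X) (hσm : σm = sigmaPos X)
      (F : Matrix (Fin n₁ ⊕ Fin n₂) (Fin n₁ ⊕ Fin n₂) ℝ) (hF : F = BstarB A (symMat X))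
      (LF1 : Matrix (Fin n₁ ⊕ Fin n₂) (Fin r) ℝ) (hLF1 : IsTopEigenspace F LF1)
      (hLF1Z0 : 0 < sigmaMin (LF1ᵀ * Z 0))
      (hFlo : 2 / 3 * specNorm X ≤ specNorm F) (hFhi : specNorm F ≤ 4 / 3 * specNorm X)
      (hμc : μ ≤ ctil / σm)
      (c : ℝ), 0 < c → c ≤ 1 →
      specNorm (Z 0)
          ≤ Real.sqrt (specNorm X / (24 * ((min (n₁ + n₂) k : ℕ) : ℝ)))
            * (c * sigmaMin (LF1ᵀ * Z 0) / (2 * κ ^ 2 * specNorm (Z 0))) ^ (18 * κ) →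
      ((⌈Real.log (c * sigmaMin (LF1ᵀ * Z 0) / (2 * κ ^ 2 * specNorm (Z 0)))
          / Real.log (1 - μ * σm / 8)⌉₊ : ℕ) : ℝ)
        ≤ Real.log (specNorm F / (16 * ((min k (n₁ + n₂) : ℕ) : ℝ) * specNorm (Z 0) ^ 2))
          / (3 * Real.log (1 + μ * specNorm F)) := by
  refine ⟨1/2, by norm_num, ?_⟩
  intro n₁ n₂ m k r A X hrankX μ hμ V₀ W₀ Z hZ κ σm hκ hσm F hF LF1 hLF1 hLF1Z0 hFlo hFhi
    hμc c hc0 hc1 hZ0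
  clear hZ hrankX hF V₀ W₀ A
  set s := specNorm X with hs
  set z := specNorm (Z 0) with hzdef
  set σ := sigmaMin (LF1ᵀ * Z 0) with hσdef
  set f := specNorm F with hfdef
  clear_value s z σ f
  have hσm0 : 0 ≤ σm := by rw [hσm]; exact sigmaPos_nonneg X
  have hσmpos : 0 < σm := by
    rcases hσm0.lt_or_eq with h | h
    · exact h
    · exfalso; rw [← h, div_zero] at hμc; linarith
  have hμσ : μ * σm ≤ 1/2 := by
    have := (le_div_iff₀ hσmpos).mp hμc
    linarith
  have hσms : σm ≤ s := by
    rw [hσm, hs]; exact sigmaPos_le_specNorm X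
  have hspos : 0 < s := lt_of_lt_of_le hσmpos hσms
  have hκs : κ = s / σm := by
    rw [hκ]; unfold condNum; rw [hs, hσm]
  have hκ1 : 1 ≤ κ := by rw [hκs]; exact (one_le_div hσmpos).mpr hσms
  have hκpos : 0 < κ := lt_of_lt_of_le one_pos hκ1
  have hsκσ : s = κ * σm := by rw [hκs]; field_simp
  have hσz : σ ≤ z := by
    rw [hσdef, hzdef]; exact sigmaMin_mul_le LF1 (Z 0) hLF1.1
  have hσpos : 0 < σ := hLF1Z0
  have hzpos : 0 < z := lt_of_lt_of_le hσpos hσz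
  have hk0 : k ≠ 0 := by
    rintro rfl
    have hzz : z ≤ 0 := by rw [hzdef]; exact specNorm_nonpos_right (Z 0)
    linarith
  have hn0 : n₁ + n₂ ≠ 0 := by
    intro h
    have h1 : n₁ = 0 := by omega
    have h2 : n₂ = 0 := by omega
    subst h1; subst h2
    have hzz : z ≤ 0 := by rw [hzdef]; exact specNorm_nonpos_left (Z 0)
    linarith
  have hm1 : (1:ℝ) ≤ ((min (n₁ + n₂) k : ℕ) : ℝ) := by
    have h : 1 ≤ min (n₁ + n₂) k := by omega
    exact_mod_cast h
  set mr : ℝ := ((min (n₁ + n₂) k : ℕ) : ℝ) with hmr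
  clear_value mr
  have hmrpos : 0 < mr := lt_of_lt_of_le one_pos hm1
  have hminc : ((min k (n₁ + n₂) : ℕ) : ℝ) = mr := by
    rw [hmr]; norm_cast; omega
  set q := c * σ / (2 * κ ^ 2 * z) with hq
  clear_value q
  have hq0 : 0 < q := by
    rw [hq]
    exact div_pos (mul_pos hc0 hσpos) (mul_pos (mul_pos two_pos (pow_pos hκpos 2)) hzpos)
  have hq2 : q ≤ 1/2 := by
    have h2 : 1 ≤ κ ^ 2 := by
      have := mul_le_mul hκ1 hκ1 zero_le_one (by linarith : (0:ℝ) ≤ κ)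
      calc (1:ℝ) = 1 * 1 := by ring
        _ ≤ κ * κ := this
        _ = κ ^ 2 := (sq κ).symm
    have h3 : c * σ ≤ κ ^ 2 * z :=
      calc c * σ ≤ 1 * z := mul_le_mul hc1 hσz hσpos.le zero_le_one
        _ ≤ κ ^ 2 * z := mul_le_mul_of_nonneg_right h2 hzpos.le
    rw [hq, div_le_iff₀ (mul_pos (mul_pos two_pos (pow_pos hκpos 2)) hzpos)]
    linarith
  set a := Real.log q with hadef
  set b := Real.log (1 - μ * σm / 8) with hbdef
  clear_value a b
  have hμσpos : 0 < μ * σm := mul_pos hμ hσmpos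
  have h1x : 0 < 1 - μ * σm / 8 := by linarith
  have hb_neg : b < 0 := by rw [hbdef]; exact Real.log_neg h1x (by linarith)
  have hb_le : b ≤ -(μ * σm / 8) := by
    rw [hbdef]
    have := Real.log_le_sub_one_of_pos h1x
    linarith
  have ha : a ≤ -Real.log 2 := by
    rw [hadef]
    calc Real.log q ≤ Real.log (1/2) := Real.log_le_log hq0 hq2
      _ = -Real.log 2 := by rw [one_div, Real.log_inv]
  have hlog2 : (1:ℝ)/2 ≤ Real.log 2 := by
    have := Real.log_two_gt_d9; norm_num at this ⊢; linarith
  have hna : 0 ≤ -a := by linarith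
  have hμσa : μ * σm ≤ -a := by linarith
  have hba : a / b ≤ 8 * (-a) / (μ * σm) := by
    rw [← neg_div_neg_eq, div_le_div_iff₀ (neg_pos.mpr hb_neg) hμσpos]
    linarith [mul_le_mul_of_nonneg_left (show μ * σm / 8 ≤ -b by linarith) hna]
  have hrat0 : 0 ≤ a / b := by
    rw [← neg_div_neg_eq]
    exact div_nonneg hna (by linarith)
  have hceil : (⌈a / b⌉₊ : ℝ) ≤ a / b + 1 := (Nat.ceil_lt_add_one hrat0).le
  have hone : 1 ≤ (-a) / (μ * σm) := (one_le_div hμσpos).mpr hμσa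
  have step1 : (⌈a / b⌉₊ : ℝ) ≤ 9 * (-a) / (μ * σm) := by
    have h9 : 8 * (-a) / (μ * σm) + (-a) / (μ * σm) = 9 * (-a) / (μ * σm) := by ring
    calc (⌈a / b⌉₊ : ℝ) ≤ a / b + 1 := hceil
      _ ≤ 8 * (-a) / (μ * σm) + (-a) / (μ * σm) := by linarith
      _ = _ := h9
  have hfpos : 0 < f := by linarith
  have hμf : 0 < μ * f := mul_pos hμ hfpos
  have hDpos : 0 < Real.log (1 + μ * f) := Real.log_pos (by linarith)
  have hDle : Real.log (1 + μ * f) ≤ (4/3) * (μ * s) := by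
    have h1 := Real.log_le_sub_one_of_pos (show (0:ℝ) < 1 + μ * f by linarith)
    have h2 : μ * f ≤ μ * (4/3 * s) := mul_le_mul_of_nonneg_left hFhi hμ.le
    linarith
  have hq36 : (q ^ (18 * κ)) ^ 2 = q ^ (36 * κ) := by
    rw [sq, ← Real.rpow_add hq0, show 18 * κ + 18 * κ = 36 * κ from by ring]
  have hz2 : z ^ 2 ≤ s / (24 * mr) * q ^ (36 * κ) := by
    have hsq : z ^ 2 ≤ (Real.sqrt (s / (24 * mr)) * q ^ (18 * κ)) ^ 2 :=
      pow_le_pow_left₀ hzpos.le hZ0 2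
    rwa [mul_pow, Real.sq_sqrt (div_nonneg hspos.le (by linarith)), hq36] at hsq
  have h16 : 16 * mr * z ^ 2 ≤ 2/3 * s * q ^ (36 * κ) := by
    have h1 : 16 * mr * z ^ 2 ≤ 16 * mr * (s / (24 * mr) * q ^ (36 * κ)) :=
      mul_le_mul_of_nonneg_left hz2 (by linarith)
    have h2 : 16 * mr * (s / (24 * mr) * q ^ (36 * κ)) = 2/3 * s * q ^ (36 * κ) := by
      field_simp [hmrpos.ne']
      ring
    linarith
  have hkey : q ^ (-(36 * κ)) ≤ f / (16 * mr * z ^ 2) := by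
    rw [le_div_iff₀ (mul_pos (by linarith : (0:ℝ) < 16 * mr) (pow_pos hzpos 2))]
    calc q ^ (-(36 * κ)) * (16 * mr * z ^ 2)
        ≤ q ^ (-(36 * κ)) * (2/3 * s * q ^ (36 * κ)) :=
          mul_le_mul_of_nonneg_left h16 (Real.rpow_nonneg hq0.le _)
      _ = 2/3 * s * (q ^ (-(36 * κ)) * q ^ (36 * κ)) := by ring
      _ = 2/3 * s := by
          rw [← Real.rpow_add hq0, neg_add_cancel, Real.rpow_zero, mul_one]
      _ ≤ f := hFlo
  have hN : 36 * κ * (-a) ≤ Real.log (f / (16 * mr * z ^ 2)) := by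
    have h1 := Real.log_le_log (Real.rpow_pos_of_pos hq0 _) hkey
    rw [Real.log_rpow hq0] at h1
    have h2 : -(36 * κ) * a = 36 * κ * (-a) := by ring
    rw [← hadef] at h1
    linarith [h2 ▸ h1]
  have final : 9 * (-a) / (μ * σm)
      ≤ Real.log (f / (16 * mr * z ^ 2)) / (3 * Real.log (1 + μ * f)) := by
    rw [div_le_div_iff₀ hμσpos (by linarith [hDpos])]
    have h1 : 9 * (-a) * (3 * Real.log (1 + μ * f)) ≤ 9 * (-a) * (3 * ((4/3) * (μ * s))) :=
      mul_le_mul_of_nonneg_left (by linarith) (by linarith)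
    have h2 : 9 * (-a) * (3 * ((4/3) * (μ * s))) = 36 * κ * (-a) * (μ * σm) := by
      rw [hsκσ]; ring
    have h3 : 36 * κ * (-a) * (μ * σm) ≤ Real.log (f / (16 * mr * z ^ 2)) * (μ * σm) :=
      mul_le_mul_of_nonneg_right hN hμσpos.le
    linarith
  rw [hminc]
  calc ((⌈a / b⌉₊ : ℕ) : ℝ) ≤ 9 * (-a) / (μ * σm) := step1
    _ ≤ _ := final

end AsymMatrixSensing
end
end

section
/- Suppose that ‖Z_t‖ ≤ 2√‖X‖, ‖Δ_t‖ ≤ ‖X‖/100, ‖Z_tQ_{t,⊥}‖ ≤ √‖X‖/100, ‖L_{X,⊥}ᵀP_{Z_tQ_t}‖ ≤ 1/100, and μ ≤ 1/(100‖X‖). Then ‖Z_{t+1}‖ ≤ 2√‖X‖. -/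
open Matrix MeasureTheory ProbabilityTheory

noncomputable section

open scoped Matrix.Norms.L2Operator

namespace ContinuousLinearMap

theorem norm_sub_smul_comp_adjoint_comp_le {E F : Type*}
    [NormedAddCommGroup E] [InnerProductSpace ℝ E] [CompleteSpace E]
    [NormedAddCommGroup F] [InnerProductSpace ℝ F] [CompleteSpace F]
    (T : E →L[ℝ] F) {μ s : ℝ} (hμ : 0 ≤ μ) (hT : ‖T‖ ≤ s) (hμs : μ * s ^ 2 ≤ 1 / 2) :
    ‖T - μ • (T ∘L (adjoint T ∘L T))‖ ≤ s - μ * s ^ 3 / 2 := by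
  have hs : 0 ≤ s := (norm_nonneg T).trans hT
  have hbound : 0 ≤ s - μ * s ^ 3 / 2 := by nlinarith
  refine opNorm_le_of_unit_norm hbound fun x hx => ?_
  set w := T x
  set u := adjoint T w
  have hw : ‖w‖ ≤ s := by simpa [hx] using T.le_of_opNorm_le hT x
  have hTu : ‖T u‖ ≤ s * ‖u‖ := T.le_of_opNorm_le hT u
  have hwTu : inner ℝ w (T u) = ‖u‖ ^ 2 := by
    rw [← adjoint_inner_left, real_inner_self_eq_norm_sq]
  have hwu : ‖w‖ ^ 2 ≤ ‖u‖ := by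
    rw [← real_inner_self_eq_norm_sq, ← adjoint_inner_right]
    simpa [hx] using real_inner_le_norm x u
  have hexpand : ‖w - μ • T u‖ ^ 2 = ‖w‖ ^ 2 - 2 * μ * ‖u‖ ^ 2 + μ ^ 2 * ‖T u‖ ^ 2 := by
    rw [@norm_sub_sq_real, inner_smul_right, hwTu, norm_smul, Real.norm_eq_abs, abs_of_nonneg hμ]
    ring
  change ‖w - μ • T u‖ ≤ _
  rw [← sq_le_sq₀ (norm_nonneg _) hbound, hexpand]
  have hw2 : ‖w‖ ^ 2 ≤ s ^ 2 := pow_le_pow_left₀ (norm_nonneg w) hw 2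
  have hTu2 : μ ^ 2 * ‖T u‖ ^ 2 ≤ μ * ‖u‖ ^ 2 / 2 :=
    calc μ ^ 2 * ‖T u‖ ^ 2 ≤ μ ^ 2 * (s * ‖u‖) ^ 2 := by gcongr
      _ = μ * ‖u‖ ^ 2 * (μ * s ^ 2) := by ring
      _ ≤ μ * ‖u‖ ^ 2 * (1 / 2) := by gcongr
      _ = μ * ‖u‖ ^ 2 / 2 := by ring
  have hu2 : μ * ‖w‖ ^ 4 ≤ μ * ‖u‖ ^ 2 := by
    rw [show ‖w‖ ^ 4 = (‖w‖ ^ 2) ^ 2 by ring]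
    exact mul_le_mul_of_nonneg_left (pow_le_pow_left₀ (by positivity) hwu 2) hμ
  -- `x ↦ x - μ x²` is increasing on `[0, 1 / (2μ)]`, which contains `‖w‖² ≤ s²`.
  have hmono : ‖w‖ ^ 2 - μ * ‖w‖ ^ 4 ≤ s ^ 2 - μ * s ^ 4 := by
    have hμw : μ * ‖w‖ ^ 2 ≤ μ * s ^ 2 := mul_le_mul_of_nonneg_left hw2 hμ
    have : 0 ≤ (s ^ 2 - ‖w‖ ^ 2) * (1 - μ * (s ^ 2 + ‖w‖ ^ 2)) :=
      mul_nonneg (by linarith) (by linarith)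
    nlinarith
  nlinarith [mul_nonneg hμ (sq_nonneg ‖u‖)]

end ContinuousLinearMap

theorem EuclideanSpace.norm_sq_eq_norm_sq_inl_add_norm_sq_inr {α β : Type*} [Fintype α]
    [Fintype β] (v : EuclideanSpace ℝ (α ⊕ β)) :
    ‖v‖ ^ 2 = ‖WithLp.toLp 2 (v.ofLp ∘ Sum.inl)‖ ^ 2 + ‖WithLp.toLp 2 (v.ofLp ∘ Sum.inr)‖ ^ 2 := by
  simp only [EuclideanSpace.real_norm_sq_eq, Fintype.sum_sum_type]
  rfl

namespace Matrix

section Rank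

variable {K ι κ κ' : Type*} [Field K] [Fintype ι] [Fintype κ] [DecidableEq ι] [DecidableEq κ]

omit [DecidableEq ι] in
theorem card_le_card_of_transpose_mul_self_eq_one {P : Matrix ι κ K} (hP : Pᵀ * P = 1) :
    Fintype.card κ ≤ Fintype.card ι :=
  calc Fintype.card κ = (Pᵀ * P).rank := by rw [hP, rank_one]
    _ ≤ Pᵀ.rank := rank_mul_le_left _ _
    _ ≤ Fintype.card ι := rank_le_card_width _

theorem mul_transpose_add_mul_transpose_eq_one {n r : ℕ} (hι : Fintype.card ι = n)
    {P : Matrix ι (Fin r) K} {Q : Matrix ι (Fin (n - r)) K} (hP : Pᵀ * P = 1) (hQ : Qᵀ * Q = 1)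
    (hPQ : Pᵀ * Q = 0) : P * Pᵀ + Q * Qᵀ = 1 := by
  have hr : r ≤ n := by simpa [hι] using card_le_card_of_transpose_mul_self_eq_one hP
  have e : ι ≃ Fin r ⊕ Fin (n - r) := Fintype.equivOfCardEq (by simp [hι]; omega)
  have hQP : Qᵀ * P = 0 := by rw [← transpose_transpose P, ← transpose_mul, hPQ, transpose_zero]
  rw [← fromCols_mul_fromRows, fromCols_mul_fromRows_eq_one_comm e, fromRows_mul_fromCols,
    hP, hQ, hPQ, hQP, fromBlocks_one]

end Rank

variable {ι κ κ' : Type*} [Fintype ι] [Fintype κ] [Fintype κ'] [DecidableEq ι] [DecidableEq κ]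
  [DecidableEq κ']

omit [DecidableEq ι] in
theorem norm_toLp_mulVec_le (M : Matrix ι κ ℝ) (v : κ → ℝ) :
    ‖WithLp.toLp 2 (M *ᵥ v)‖ ≤ ‖M‖ * ‖WithLp.toLp 2 v‖ := by
  simpa using l2_opNorm_mulVec M (WithLp.toLp 2 v)

theorem l2_opNorm_transpose (M : Matrix ι κ ℝ) : ‖Mᵀ‖ = ‖M‖ := by
  simpa using l2_opNorm_conjTranspose M

omit [DecidableEq ι] in
theorem l2_opNorm_le_one_of_transpose_mul_self_eq_one {M : Matrix ι κ ℝ} (h : Mᵀ * M = 1) :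
    ‖M‖ ≤ 1 := by
  have hM : ‖M‖ * ‖M‖ = ‖(1 : Matrix κ κ ℝ)‖ := by
    rw [← l2_opNorm_conjTranspose_mul_self, conjTranspose_eq_transpose_of_trivial, h]
  have h1 : ‖(1 : Matrix κ κ ℝ)‖ = ‖(1 : Matrix κ κ ℝ)‖ * ‖(1 : Matrix κ κ ℝ)‖ := by
    simpa using l2_opNorm_conjTranspose_mul_self (1 : Matrix κ κ ℝ)
  have h1le : ‖(1 : Matrix κ κ ℝ)‖ ≤ 1 := by nlinarith [norm_nonneg (1 : Matrix κ κ ℝ)]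
  nlinarith [norm_nonneg M]

theorem l2_opNorm_sub_smul_mul_transpose_mul_le (Z : Matrix ι κ ℝ) {μ s : ℝ} (hμ : 0 ≤ μ)
    (hZ : ‖Z‖ ≤ s) (hμs : μ * s ^ 2 ≤ 1 / 2) :
    ‖Z - μ • (Z * Zᵀ * Z)‖ ≤ s - μ * s ^ 3 / 2 := by
  let φ := (toEuclideanLin (𝕜 := ℝ) (m := ι) (n := κ)).trans LinearMap.toContinuousLinearMap
  have hφ : φ (Z - μ • (Z * Zᵀ * Z))
      = φ Z - μ • (φ Z ∘L (ContinuousLinearMap.adjoint (φ Z) ∘L φ Z)) := by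
    ext1 x
    simp [φ, ← conjTranspose_eq_transpose_of_trivial, ← LinearMap.adjoint_toContinuousLinearMap,
      ← toEuclideanLin_conjTranspose_eq_adjoint]
  rw [l2_opNorm_def, hφ]
  exact (φ Z).norm_sub_smul_comp_adjoint_comp_le hμ hZ hμs

theorem l2_opNorm_transpose_mul_mul_add_le (A B : Matrix ι κ ℝ) (G : Matrix ι ι ℝ) :
    ‖(A + B)ᵀ * G * (A + B)‖ ≤ ‖Aᵀ * G * A‖ + ‖B‖ * ‖G‖ * (‖A‖ + ‖A + B‖) := by
  have hsplit : (A + B)ᵀ * G * (A + B) = Aᵀ * G * A + Aᵀ * G * B + Bᵀ * G * (A + B) := by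
    simp only [transpose_add, Matrix.add_mul, Matrix.mul_add]
    abel
  have hAB : ‖Aᵀ * G * B‖ ≤ ‖A‖ * ‖G‖ * ‖B‖ :=
    (l2_opNorm_mul _ _).trans (by grw [l2_opNorm_mul, l2_opNorm_transpose])
  have hBA : ‖Bᵀ * G * (A + B)‖ ≤ ‖B‖ * ‖G‖ * ‖A + B‖ :=
    (l2_opNorm_mul _ _).trans (by grw [l2_opNorm_mul, l2_opNorm_transpose])
  rw [hsplit]
  grw [norm_add_le, norm_add_le, hAB, hBA]
  linarith

theorem l2_opNorm_transpose_mul_mul_le_of_mul_transpose_mul_eq {P : Matrix ι κ' ℝ}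
    (hP : Pᵀ * P = 1) {A : Matrix ι κ ℝ} (hA : P * Pᵀ * A = A) (G : Matrix ι ι ℝ) :
    ‖Aᵀ * G * A‖ ≤ ‖Pᵀ * G * P‖ * ‖A‖ ^ 2 := by
  have hPA : ‖Pᵀ * A‖ ≤ ‖A‖ := by
    grw [l2_opNorm_mul, l2_opNorm_transpose, l2_opNorm_le_one_of_transpose_mul_self_eq_one hP,
      one_mul]
  have hform : Aᵀ * G * A = (Pᵀ * A)ᵀ * (Pᵀ * G * P) * (Pᵀ * A) := by
    conv_lhs => rw [← hA]
    simp only [transpose_mul, transpose_transpose, Matrix.mul_assoc]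
  rw [hform]
  calc ‖(Pᵀ * A)ᵀ * (Pᵀ * G * P) * (Pᵀ * A)‖
      ≤ ‖Pᵀ * A‖ * ‖Pᵀ * G * P‖ * ‖Pᵀ * A‖ := by
        grw [l2_opNorm_mul, l2_opNorm_mul, l2_opNorm_transpose]
    _ ≤ ‖A‖ * ‖Pᵀ * G * P‖ * ‖A‖ := by gcongr
    _ = ‖Pᵀ * G * P‖ * ‖A‖ ^ 2 := by ring

variable {ο : Type*} [Fintype ο] [DecidableEq ο]

theorem l2_opNorm_transpose_mul_mul_self_le_of_isotropic {L : Matrix ι κ ℝ}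
    {L' : Matrix ι κ' ℝ} {P : Matrix ι ο ℝ} {G : Matrix ι ι ℝ} {δ : ℝ} (hL : Lᵀ * L = 1)
    (hL' : L'ᵀ * L' = 1) (hLL' : L * Lᵀ + L' * L'ᵀ = 1) (hP : Pᵀ * P = 1) (hG : ‖G‖ ≤ 1)
    (hLGL : Lᵀ * G * L = 0) (hδ : ‖L'ᵀ * P‖ ≤ δ) :
    ‖Pᵀ * G * P‖ ≤ 2 * δ := by
  have hP1 := l2_opNorm_le_one_of_transpose_mul_self_eq_one hP
  have hsplit := l2_opNorm_transpose_mul_mul_add_le (L * (Lᵀ * P)) (L' * (L'ᵀ * P)) G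
  have hAB : L * (Lᵀ * P) + L' * (L'ᵀ * P) = P := by
    rw [← Matrix.mul_assoc, ← Matrix.mul_assoc, ← Matrix.add_mul, hLL', Matrix.one_mul]
  have hAGA : (L * (Lᵀ * P))ᵀ * G * (L * (Lᵀ * P)) = 0 := by
    have hform : (L * (Lᵀ * P))ᵀ * G * (L * (Lᵀ * P)) = (Lᵀ * P)ᵀ * (Lᵀ * G * L) * (Lᵀ * P) := by
      simp only [transpose_mul, Matrix.mul_assoc]
    rw [hform, hLGL, Matrix.mul_zero, Matrix.zero_mul]
  have hL1 := l2_opNorm_le_one_of_transpose_mul_self_eq_one hL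
  have hA : ‖L * (Lᵀ * P)‖ ≤ 1 :=
    calc ‖L * (Lᵀ * P)‖ ≤ ‖L‖ * (‖Lᵀ‖ * ‖P‖) := by grw [l2_opNorm_mul, l2_opNorm_mul]
      _ ≤ 1 * (1 * 1) := by rw [l2_opNorm_transpose]; gcongr
      _ = 1 := by norm_num
  have hB : ‖L' * (L'ᵀ * P)‖ ≤ δ := by
    grw [l2_opNorm_mul, l2_opNorm_le_one_of_transpose_mul_self_eq_one hL', hδ, one_mul]
  rw [hAB, hAGA, norm_zero] at hsplit
  have hδ0 : 0 ≤ δ := (norm_nonneg _).trans hδ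
  calc ‖Pᵀ * G * P‖ ≤ 0 + ‖L' * (L'ᵀ * P)‖ * ‖G‖ * (‖L * (Lᵀ * P)‖ + ‖P‖) := hsplit
    _ ≤ 0 + δ * 1 * (1 + 1) := by gcongr
    _ = 2 * δ := by ring

theorem l2_opNorm_transpose_mul_mul_self_le_of_orthogonal_split {κ'' : Type*}
    [Fintype κ''] [DecidableEq κ''] {Z : Matrix ι κ ℝ} {Q : Matrix κ κ' ℝ} {Q' : Matrix κ κ'' ℝ}
    {P : Matrix ι ο ℝ} (G : Matrix ι ι ℝ) {ε : ℝ} (hQ : Qᵀ * Q = 1) (hQ' : Q'ᵀ * Q' = 1)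
    (hQQ' : Q * Qᵀ + Q' * Q'ᵀ = 1) (hP : Pᵀ * P = 1) (hPZQ : P * Pᵀ * (Z * Q) = Z * Q)
    (hε : ‖Z * Q'‖ ≤ ε) :
    ‖Zᵀ * G * Z‖ ≤ ‖Pᵀ * G * P‖ * ‖Z‖ ^ 2 + 2 * ε * ‖G‖ * ‖Z‖ := by
  have hsplit := l2_opNorm_transpose_mul_mul_add_le (Z * Q * Qᵀ) (Z * Q' * Q'ᵀ) G
  have hAB : Z * Q * Qᵀ + Z * Q' * Q'ᵀ = Z := by
    rw [Matrix.mul_assoc, Matrix.mul_assoc, ← Matrix.mul_add, hQQ', Matrix.mul_one]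
  have hPA : P * Pᵀ * (Z * Q * Qᵀ) = Z * Q * Qᵀ := by
    rw [← Matrix.mul_assoc, hPZQ]
  have hA : ‖Z * Q * Qᵀ‖ ≤ ‖Z‖ :=
    calc ‖Z * Q * Qᵀ‖ ≤ ‖Z‖ * ‖Q‖ * ‖Qᵀ‖ := by grw [l2_opNorm_mul, l2_opNorm_mul]
      _ ≤ ‖Z‖ * 1 * 1 := by
        rw [l2_opNorm_transpose]
        gcongr <;> exact l2_opNorm_le_one_of_transpose_mul_self_eq_one hQ
      _ = ‖Z‖ := by ring
  have hB : ‖Z * Q' * Q'ᵀ‖ ≤ ε :=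
    calc ‖Z * Q' * Q'ᵀ‖ ≤ ‖Z * Q'‖ * ‖Q'ᵀ‖ := l2_opNorm_mul _ _
      _ ≤ ε * 1 := by
        rw [l2_opNorm_transpose]
        gcongr
        exacts [(norm_nonneg _).trans hε, l2_opNorm_le_one_of_transpose_mul_self_eq_one hQ']
      _ = ε := mul_one ε
  have hAGA := l2_opNorm_transpose_mul_mul_le_of_mul_transpose_mul_eq hP hPA G
  have hε0 : 0 ≤ ε := (norm_nonneg _).trans hε
  rw [hAB] at hsplit
  calc ‖Zᵀ * G * Z‖
      ≤ ‖Pᵀ * G * P‖ * ‖Z * Q * Qᵀ‖ ^ 2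
          + ‖Z * Q' * Q'ᵀ‖ * ‖G‖ * (‖Z * Q * Qᵀ‖ + ‖Z‖) := by
        linarith
    _ ≤ ‖Pᵀ * G * P‖ * ‖Z‖ ^ 2 + ε * ‖G‖ * (‖Z‖ + ‖Z‖) := by gcongr
    _ = ‖Pᵀ * G * P‖ * ‖Z‖ ^ 2 + 2 * ε * ‖G‖ * ‖Z‖ := by ring

end Matrix

namespace AsymMatrixSensing

section Norms

variable {ι₁ ι₂ : Type*} [Fintype ι₁] [Fintype ι₂]

theorem euclNorm_eq_norm_toLp (v : ι₁ → ℝ) : euclNorm v = ‖WithLp.toLp 2 v‖ := by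
  simp [euclNorm, EuclideanSpace.norm_eq, sq_abs]

theorem specNorm_eq_l2_opNorm [DecidableEq ι₂] (M : Matrix ι₁ ι₂ ℝ) : specNorm M = ‖M‖ := by
  rw [l2_opNorm_def, ← ContinuousLinearMap.sSup_unitClosedBall_eq_norm, specNorm]
  congr 1
  ext c
  simp only [Set.mem_ofPred_eq, Set.mem_image, Metric.mem_closedBall, dist_zero_right]
  constructor
  · rintro ⟨x, hx, rfl⟩
    exact ⟨WithLp.toLp 2 x, by rwa [← euclNorm_eq_norm_toLp], by simp [euclNorm_eq_norm_toLp]⟩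
  · rintro ⟨x, hx, rfl⟩
    exact ⟨x.ofLp, by rwa [euclNorm_eq_norm_toLp], by simp [euclNorm_eq_norm_toLp]; rfl⟩

end Norms

variable {n₁ n₂ m k : ℕ}

theorem l2_opNorm_symMat_le (X : Matrix (Fin n₁) (Fin n₂) ℝ) : ‖symMat X‖ ≤ ‖X‖ := by
  rw [l2_opNorm_def]
  refine ContinuousLinearMap.opNorm_le_bound _ (norm_nonneg _) fun v => ?_
  rw [← sq_le_sq₀ (norm_nonneg _) (mul_nonneg (norm_nonneg _) (norm_nonneg _)), mul_pow,
    EuclideanSpace.norm_sq_eq_norm_sq_inl_add_norm_sq_inr v,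
    EuclideanSpace.norm_sq_eq_norm_sq_inl_add_norm_sq_inr]
  have h₁ := norm_toLp_mulVec_le X (v.ofLp ∘ Sum.inr)
  have h₂ := norm_toLp_mulVec_le Xᵀ (v.ofLp ∘ Sum.inl)
  rw [l2_opNorm_transpose] at h₂
  have hblock : ∀ w : Fin n₁ ⊕ Fin n₂ → ℝ,
      symMat X *ᵥ w = Sum.elim (X *ᵥ (w ∘ Sum.inr)) (Xᵀ *ᵥ (w ∘ Sum.inl)) := by
    simp [symMat, fromBlocks_mulVec]
  simp only [LinearEquiv.trans_apply, LinearMap.coe_toContinuousLinearMap', toLpLin_apply,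
    hblock, Sum.elim_comp_inl, Sum.elim_comp_inr]
  have h₁' := pow_le_pow_left₀ (norm_nonneg _) h₁ 2
  have h₂' := pow_le_pow_left₀ (norm_nonneg _) h₂ 2
  rw [mul_pow] at h₁' h₂'
  linarith

theorem flipSign_transpose : (flipSign n₁ n₂)ᵀ = flipSign n₁ n₂ := by
  simp [flipSign, fromBlocks_transpose]

theorem flipSign_mul_self : flipSign n₁ n₂ * flipSign n₁ n₂ = 1 := by
  simp [flipSign, fromBlocks_multiply, fromBlocks_one]

theorem l2_opNorm_flipSign_le : ‖flipSign n₁ n₂‖ ≤ 1 :=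
  l2_opNorm_le_one_of_transpose_mul_self_eq_one (by rw [flipSign_transpose, flipSign_mul_self])

theorem Zstack_transpose_mul_Zstack {κ κ' : ℕ} (V : Matrix (Fin n₁) (Fin κ) ℝ)
    (W : Matrix (Fin n₂) (Fin κ) ℝ) (V' : Matrix (Fin n₁) (Fin κ') ℝ)
    (W' : Matrix (Fin n₂) (Fin κ') ℝ) :
    (Zstack V W)ᵀ * Zstack V' W' = (2 : ℝ)⁻¹ • (Vᵀ * V' + Wᵀ * W') := by
  rw [Zstack, Zstack, transpose_smul, transpose_fromRows, Matrix.smul_mul, Matrix.mul_smul,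
    smul_smul, ← mul_inv, Real.mul_self_sqrt zero_le_two, fromCols_mul_fromRows]

theorem flipSign_mul_Zstack {κ : ℕ} (V : Matrix (Fin n₁) (Fin κ) ℝ)
    (W : Matrix (Fin n₂) (Fin κ) ℝ) : flipSign n₁ n₂ * Zstack V W = Zstack V (-W) := by
  rw [Zstack, Zstack, flipSign, Matrix.mul_smul, fromBlocks_mul_fromRows]
  simp

theorem Zstack_transpose_mul_Zstack_self_eq_one {r : ℕ} {V : Matrix (Fin n₁) (Fin r) ℝ}
    {W : Matrix (Fin n₂) (Fin r) ℝ} (hV : Vᵀ * V = 1) (hW : Wᵀ * W = 1) :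
    (Zstack V W)ᵀ * Zstack V W = 1 := by
  rw [Zstack_transpose_mul_Zstack, hV, hW, ← two_smul ℝ, smul_smul, inv_mul_cancel₀ two_ne_zero,
    one_smul]

theorem Zstack_transpose_mul_flipSign_mul_Zstack_self {r : ℕ} {V : Matrix (Fin n₁) (Fin r) ℝ}
    {W : Matrix (Fin n₂) (Fin r) ℝ} (hVW : Vᵀ * V = Wᵀ * W) :
    (Zstack V W)ᵀ * flipSign n₁ n₂ * Zstack V W = 0 := by
  rw [Matrix.mul_assoc, flipSign_mul_Zstack, Zstack_transpose_mul_Zstack, Matrix.mul_neg, hVW,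
    add_neg_cancel, smul_zero]

theorem symMat_sub (X Y : Matrix (Fin n₁) (Fin n₂) ℝ) :
    symMat (X - Y) = symMat X - symMat Y := by
  ext (i | i) (j | j) <;> simp [symMat]

theorem minner_smul_left {ι₁ ι₂ : Type*} [Fintype ι₁] [Fintype ι₂] (c : ℝ)
    (M N : Matrix ι₁ ι₂ ℝ) : minner (c • M) N = c * minner M N := by
  simp [minner, Finset.mul_sum, mul_assoc]

theorem minner_fromBlocks_symMat (P N : Matrix (Fin n₁) (Fin n₂) ℝ) :
    minner (fromBlocks 0 P Pᵀ (0 : Matrix (Fin n₂) (Fin n₂) ℝ)) (symMat N)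
      = 2 * minner P N := by
  simp only [minner, symMat, Fintype.sum_sum_type, fromBlocks_apply₁₁, fromBlocks_apply₁₂,
    fromBlocks_apply₂₁, fromBlocks_apply₂₂, Matrix.zero_apply, zero_mul, Finset.sum_const_zero,
    zero_add, add_zero, transpose_apply]
  rw [Finset.sum_comm]
  ring

theorem BstarB_symMat (A : Fin m → Matrix (Fin n₁) (Fin n₂) ℝ)
    (N : Matrix (Fin n₁) (Fin n₂) ℝ) :
    BstarB A (symMat N) = symMat (AstarA A N) := by
  have hterm : ∀ i, minner (Bmat A i) (symMat N) • Bmat A i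
      = minner (A i) N • fromBlocks 0 (A i) (A i)ᵀ (0 : Matrix (Fin n₂) (Fin n₂) ℝ) := by
    intro i
    rw [Bmat, minner_smul_left, minner_fromBlocks_symMat, smul_smul]
    congr 1
    have h2 : (√2)⁻¹ * (√2)⁻¹ = (2 : ℝ)⁻¹ := by rw [← mul_inv, Real.mul_self_sqrt zero_le_two]
    linear_combination (2 * minner (A i) N) * h2
  rw [BstarB, Finset.sum_congr rfl fun i _ => hterm i, AstarA, symMat]
  ext (i | i) (j | j) <;> simp [Matrix.sum_apply]

theorem Zstack_mul_transpose_Zstack {κ : ℕ} (V V' : Matrix (Fin n₁) (Fin κ) ℝ)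
    (W W' : Matrix (Fin n₂) (Fin κ) ℝ) :
    Zstack V W * (Zstack V' W')ᵀ
      = (2 : ℝ)⁻¹ • fromBlocks (V * V'ᵀ) (V * W'ᵀ) (W * V'ᵀ) (W * W'ᵀ) := by
  rw [Zstack, Zstack, transpose_smul, transpose_fromRows, Matrix.smul_mul, Matrix.mul_smul,
    smul_smul, ← mul_inv, Real.mul_self_sqrt zero_le_two, fromRows_mul_fromCols]

theorem Zit_mul_transpose_sub_Ztil_mul_transpose (A : Fin m → Matrix (Fin n₁) (Fin n₂) ℝ)
    (X : Matrix (Fin n₁) (Fin n₂) ℝ) (μ : ℝ) (V₀ : Matrix (Fin n₁) (Fin k) ℝ)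
    (W₀ : Matrix (Fin n₂) (Fin k) ℝ) (t : ℕ) :
    Zit A X μ V₀ W₀ t * (Zit A X μ V₀ W₀ t)ᵀ - Ztil A X μ V₀ W₀ t * (Ztil A X μ V₀ W₀ t)ᵀ
      = symMat ((iter A X μ V₀ W₀ t).1 * (iter A X μ V₀ W₀ t).2ᵀ) := by
  rw [Zit, Ztil, Zstack_mul_transpose_Zstack, Zstack_mul_transpose_Zstack, symMat]
  ext (i | i) (j | j) <;> simp [transpose_mul] <;> ring

theorem Zit_succ (A : Fin m → Matrix (Fin n₁) (Fin n₂) ℝ) (X : Matrix (Fin n₁) (Fin n₂) ℝ)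
    (μ : ℝ) (V₀ : Matrix (Fin n₁) (Fin k) ℝ) (W₀ : Matrix (Fin n₂) (Fin k) ℝ) (t : ℕ) :
    Zit A X μ V₀ W₀ (t + 1) = Zit A X μ V₀ W₀ t
      - μ • (symMat (AstarA A ((iter A X μ V₀ W₀ t).1 * (iter A X μ V₀ W₀ t).2ᵀ - X))
          * Zit A X μ V₀ W₀ t) := by
  rw [Zit, Zit, iter, Zstack, Zstack, symMat, Matrix.mul_smul, fromBlocks_mul_fromRows]
  ext (i | i) j <;> simp <;> ring

theorem Ztil_eq_flipSign_mul_Zit (A : Fin m → Matrix (Fin n₁) (Fin n₂) ℝ)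
    (X : Matrix (Fin n₁) (Fin n₂) ℝ) (μ : ℝ) (V₀ : Matrix (Fin n₁) (Fin k) ℝ)
    (W₀ : Matrix (Fin n₂) (Fin k) ℝ) (t : ℕ) :
    Ztil A X μ V₀ W₀ t = flipSign n₁ n₂ * Zit A X μ V₀ W₀ t :=
  (flipSign_mul_Zstack _ _).symm

theorem Zit_succ_eq_Δit_form (A : Fin m → Matrix (Fin n₁) (Fin n₂) ℝ)
    (X : Matrix (Fin n₁) (Fin n₂) ℝ) (μ : ℝ) (V₀ : Matrix (Fin n₁) (Fin k) ℝ)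
    (W₀ : Matrix (Fin n₂) (Fin k) ℝ) (t : ℕ) :
    let Z := Zit A X μ V₀ W₀ t
    let F := flipSign n₁ n₂
    Zit A X μ V₀ W₀ (t + 1) = Z - μ • (Z * Zᵀ * Z) + μ • (symMat X * Z)
      + μ • (F * Z * (Zᵀ * F * Z)) + μ • (Δit A X μ V₀ W₀ t * Z) := by
  dsimp only
  have hsym : symMat (AstarA A ((iter A X μ V₀ W₀ t).1 * (iter A X μ V₀ W₀ t).2ᵀ - X))
      = Zit A X μ V₀ W₀ t * (Zit A X μ V₀ W₀ t)ᵀ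
        - flipSign n₁ n₂ * Zit A X μ V₀ W₀ t * (flipSign n₁ n₂ * Zit A X μ V₀ W₀ t)ᵀ
        - symMat X - Δit A X μ V₀ W₀ t := by
    rw [← BstarB_symMat, symMat_sub, ← Zit_mul_transpose_sub_Ztil_mul_transpose, Δit,
      Ztil_eq_flipSign_mul_Zit]
    abel
  rw [Zit_succ, hsym, transpose_mul, flipSign_transpose]
  simp only [Matrix.sub_mul, Matrix.mul_assoc, smul_sub]
  abel

theorem step_polynomial_le {μ s q : ℝ} (hμ : 0 ≤ μ) (hs : 0 ≤ s) (hsq : s ≤ 2 * q)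
    (hμq : μ * q ^ 2 ≤ 1 / 100) :
    s - μ * s ^ 3 / 2 + μ * (q ^ 2 * s) + μ * (s * (s ^ 2 / 50 + s * q / 50))
      + μ * (q ^ 2 / 100 * s) ≤ 2 * q := by
  have hrw : s - μ * s ^ 3 / 2 + μ * (q ^ 2 * s) + μ * (s * (s ^ 2 / 50 + s * q / 50))
      + μ * (q ^ 2 / 100 * s)
      = s + μ * s * (101 / 100 * q ^ 2 + s * q / 50 - 12 / 25 * s ^ 2) := by
    ring
  rw [hrw]
  have hμs : 0 ≤ μ * s := mul_nonneg hμ hs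
  rcases le_or_gt s (3 / 2 * q) with hsmall | hlarge
  · -- the drift is at most a `1.04 μ q²` fraction of `s`
    have : μ * s * (101 / 100 * q ^ 2 + s * q / 50 - 12 / 25 * s ^ 2)
        ≤ 104 / 100 * (μ * q ^ 2) * s := by
      nlinarith [mul_le_mul_of_nonneg_left hsmall (mul_nonneg hμs (by linarith : 0 ≤ q))]
    nlinarith
  · -- the cubic term dominates
    have : 101 / 100 * q ^ 2 + s * q / 50 - 12 / 25 * s ^ 2 ≤ 0 := by nlinarith
    nlinarith [mul_nonpos_of_nonneg_of_nonpos hμs this]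

variable {ι κ : Type*} [Fintype ι] [Fintype κ] [DecidableEq ι] [DecidableEq κ]

theorem l2_opNorm_step_le {Z : Matrix ι κ ℝ} {S F Δ : Matrix ι ι ℝ} {μ q : ℝ} (hμ : 0 ≤ μ)
    (hμq : μ * q ^ 2 ≤ 1 / 100) (hZ : ‖Z‖ ≤ 2 * q) (hS : ‖S‖ ≤ q ^ 2) (hF : ‖F‖ ≤ 1)
    (hΔ : ‖Δ‖ ≤ q ^ 2 / 100) (hZFZ : ‖Zᵀ * F * Z‖ ≤ ‖Z‖ ^ 2 / 50 + ‖Z‖ * q / 50) :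
    ‖Z - μ • (Z * Zᵀ * Z) + μ • (S * Z) + μ • (F * Z * (Zᵀ * F * Z)) + μ • (Δ * Z)‖ ≤ 2 * q := by
  have hμs : μ * ‖Z‖ ^ 2 ≤ 1 / 2 := by
    have : ‖Z‖ ^ 2 ≤ 4 * q ^ 2 := by nlinarith [norm_nonneg Z]
    nlinarith
  have hFZ : ‖F * Z‖ ≤ ‖Z‖ := by grw [l2_opNorm_mul, hF, one_mul]
  grw [norm_add_le, norm_add_le, norm_add_le, norm_smul, norm_smul, norm_smul, Real.norm_eq_abs,
    abs_of_nonneg hμ, l2_opNorm_sub_smul_mul_transpose_mul_le Z hμ le_rfl hμs, l2_opNorm_mul S,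
    l2_opNorm_mul (F * Z), l2_opNorm_mul Δ, hS, hFZ, hZFZ, hΔ]
  exact step_polynomial_le hμ (norm_nonneg Z) hZ hμq

theorem statement12_norm_controlled_general
    {n₁ n₂ m k r : ℕ}
    (A : Fin m → Matrix (Fin n₁) (Fin n₂) ℝ) (X : Matrix (Fin n₁) (Fin n₂) ℝ)
    (PX : Matrix (Fin n₁) (Fin r) ℝ) (QX : Matrix (Fin n₂) (Fin r) ℝ)
    (hPX : PXᵀ * PX = 1) (hQX : QXᵀ * QX = 1)
    (μ : ℝ) (hμ : 0 < μ)
    (V₀ : Matrix (Fin n₁) (Fin k) ℝ) (W₀ : Matrix (Fin n₂) (Fin k) ℝ)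
    (Z : ℕ → Matrix (Fin n₁ ⊕ Fin n₂) (Fin k) ℝ)
    (hZ : Z = Zit A X μ V₀ W₀)
    (LX : Matrix (Fin n₁ ⊕ Fin n₂) (Fin r) ℝ) (hLX : LX = Zstack PX QX)
    (Δ : ℕ → Matrix (Fin n₁ ⊕ Fin n₂) (Fin n₁ ⊕ Fin n₂) ℝ) (hΔ : Δ = Δit A X μ V₀ W₀)
    (LXp : Matrix (Fin n₁ ⊕ Fin n₂) (Fin (n₁ + n₂ - r)) ℝ)
    (hLXp1 : LXpᵀ * LXp = 1) (hLXp2 : LXᵀ * LXp = 0)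
    (t : ℕ)
    (Qt : Matrix (Fin k) (Fin r) ℝ) (hQt1 : Qtᵀ * Qt = 1)
    (Qtp : Matrix (Fin k) (Fin (k - r)) ℝ) (hQtp1 : Qtpᵀ * Qtp = 1) (hQtp2 : Qtᵀ * Qtp = 0)
    (PZ : Matrix (Fin n₁ ⊕ Fin n₂) (Fin r) ℝ) (hPZ : IsOrthCol PZ (Z t * Qt))
    (h1 : specNorm (Z t) ≤ 2 * Real.sqrt (specNorm X))
    (h2 : specNorm (Δ t) ≤ specNorm X / 100)
    (h3 : specNorm (Z t * Qtp) ≤ Real.sqrt (specNorm X) / 100)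
    (h4 : specNorm (LXpᵀ * PZ) ≤ 1 / 100)
    (h5 : μ ≤ 1 / (100 * specNorm X)) :
    specNorm (Z (t + 1)) ≤ 2 * Real.sqrt (specNorm X) := by
  subst hZ hΔ hLX
  obtain ⟨hPZ1, -, hPZ3⟩ := hPZ
  simp only [specNorm_eq_l2_opNorm] at h1 h2 h3 h4 h5 ⊢
  set q := √‖X‖
  have hq : q ^ 2 = ‖X‖ := Real.sq_sqrt (norm_nonneg X)
  have hμq : μ * q ^ 2 ≤ 1 / 100 := by
    rw [hq]
    rcases (norm_nonneg X).eq_or_lt with hX | hX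
    · rw [← hX]; norm_num
    · rw [le_div_iff₀ (by positivity)] at h5
      linarith
  have hLX1 := Zstack_transpose_mul_Zstack_self_eq_one hPX hQX
  have hLL := mul_transpose_add_mul_transpose_eq_one (by simp) hLX1 hLXp1 hLXp2
  have hQQ := mul_transpose_add_mul_transpose_eq_one (Fintype.card_fin k) hQt1 hQtp1 hQtp2
  have hPFP := l2_opNorm_transpose_mul_mul_self_le_of_isotropic hLX1 hLXp1 hLL hPZ1
    l2_opNorm_flipSign_le (Zstack_transpose_mul_flipSign_mul_Zstack_self (hPX.trans hQX.symm)) h4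
  have hZFZ := l2_opNorm_transpose_mul_mul_self_le_of_orthogonal_split (flipSign n₁ n₂) hQt1
    hQtp1 hQQ hPZ1 hPZ3 h3
  rw [Zit_succ_eq_Δit_form]
  refine l2_opNorm_step_le hμ.le hμq h1 (hq ▸ l2_opNorm_symMat_le X) l2_opNorm_flipSign_le
    (hq ▸ h2) (hZFZ.trans ?_)
  grw [hPFP, l2_opNorm_flipSign_le]
  linarith

/-- the spectral norm of the iterates stays controlled. -/
theorem statement12_norm_controlled
    {n₁ n₂ m k r : ℕ}
    (A : Fin m → Matrix (Fin n₁) (Fin n₂) ℝ) (X : Matrix (Fin n₁) (Fin n₂) ℝ)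
    (PX : Matrix (Fin n₁) (Fin r) ℝ) (QX : Matrix (Fin n₂) (Fin r) ℝ) (σX : Fin r → ℝ)
    (hPX : PXᵀ * PX = 1) (hQX : QXᵀ * QX = 1)
    (hσpos : ∀ i, 0 < σX i) (hσanti : Antitone σX)
    (hXsvd : X = PX * Matrix.diagonal σX * QXᵀ)
    (μ : ℝ) (hμ : 0 < μ)
    (V₀ : Matrix (Fin n₁) (Fin k) ℝ) (W₀ : Matrix (Fin n₂) (Fin k) ℝ)
    (Z Z' : ℕ → Matrix (Fin n₁ ⊕ Fin n₂) (Fin k) ℝ)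
    (hZ : Z = Zit A X μ V₀ W₀) (hZ' : Z' = Ztil A X μ V₀ W₀)
    (LX : Matrix (Fin n₁ ⊕ Fin n₂) (Fin r) ℝ) (hLX : LX = Zstack PX QX)
    (κ σm : ℝ) (hκ : κ = condNum X) (hσm : σm = sigmaPos X)
    (Δ : ℕ → Matrix (Fin n₁ ⊕ Fin n₂) (Fin n₁ ⊕ Fin n₂) ℝ) (hΔ : Δ = Δit A X μ V₀ W₀)
    (LXp : Matrix (Fin n₁ ⊕ Fin n₂) (Fin (n₁ + n₂ - r)) ℝ)
    (hLXp1 : LXpᵀ * LXp = 1) (hLXp2 : LXᵀ * LXp = 0)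
    (t : ℕ)
    (Qt : Matrix (Fin k) (Fin r) ℝ) (hQt1 : Qtᵀ * Qt = 1)
    (hQt2 : LXᵀ * Z t * Qt * Qtᵀ = LXᵀ * Z t)
    (Qtp : Matrix (Fin k) (Fin (k - r)) ℝ) (hQtp1 : Qtpᵀ * Qtp = 1) (hQtp2 : Qtᵀ * Qtp = 0)
    (PZ : Matrix (Fin n₁ ⊕ Fin n₂) (Fin r) ℝ) (hPZ : IsOrthCol PZ (Z t * Qt))
    (h1 : specNorm (Z t) ≤ 2 * Real.sqrt (specNorm X))
    (h2 : specNorm (Δ t) ≤ specNorm X / 100)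
    (h3 : specNorm (Z t * Qtp) ≤ Real.sqrt (specNorm X) / 100)
    (h4 : specNorm (LXpᵀ * PZ) ≤ 1 / 100)
    (h5 : μ ≤ 1 / (100 * specNorm X)) :
    specNorm (Z (t + 1)) ≤ 2 * Real.sqrt (specNorm X) :=
  statement12_norm_controlled_general A X PX QX hPX hQX μ hμ V₀ W₀ Z hZ LX hLX Δ hΔ LXp hLXp1 hLXp2
    t Qt hQt1 Qtp hQtp1 hQtp2 PZ hPZ h1 h2 h3 h4 h5

end AsymMatrixSensing
end
end
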